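/- arXiv:2305.20074 — 2 statements merged into one kernel-verified Lean document; each statement's English description precedes it below -/
import Mathlib

section
/- Let X and Y be finite types and let p be a joint pmf on X × Y whose marginals p_X and p_Y are everywhere positive. Define Q(x, y) = p(x, y) / √(p_X(x) p_Y(y)). Then the following are equivalent: (i) X and Y are independent, i.e., p(x, y) = p_X(x) p_Y(y) for all (x, y); (ii) Q equals the rank-one matrix u vᵀ where u(x) = √(p_X(x)) and v(y) = √(p_Y(y)); (iii) all singular values of Q other than the single top singular value 1 are equal to 0. -/
/-!
Write `u = √p_X`, `v = √p_Y`. Then `Q v = u`, `uᵀ Q = v`, `‖u‖ = ‖v‖ = 1`, and Cauchy–Schwarz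
weighted by the conditional laws `p(x, ·) / p_X(x)` gives `‖Q w‖ ≤ ‖w‖`, so the top singular
value is `1`, attained at `v`. Independence is the entrywise identity `Q = u vᵀ`. A rank-one
matrix kills a hyperplane, which meets every subspace of dimension at least two, so its lower
singular values vanish. Conversely, if some `w ⊥ v` had `Q w ≠ 0`, then `Q w ⊥ u`, and `Q` would
stretch every vector of `span {v, w}` by at least `min 1 (‖Q w‖ / ‖w‖) > 0`; hence `Q` kills
`v⊥` and `Q w = (v ⬝ w) u` for all `w`.
-/

open Finset Matrix

/-- Marginal pmf of the first coordinate of a joint pmf on `X × Y`. -/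
noncomputable def margX {X Y : Type*} [Fintype Y] (p : X × Y → ℝ) (x : X) : ℝ :=
  ∑ y, p (x, y)

/-- Marginal pmf of the second coordinate of a joint pmf on `X × Y`. -/
noncomputable def margY {X Y : Type*} [Fintype X] (p : X × Y → ℝ) (y : Y) : ℝ :=
  ∑ x, p (x, y)

/-- The Euclidean norm of a finitely indexed real vector. -/
noncomputable def euclNorm {n : Type*} [Fintype n] (v : n → ℝ) : ℝ :=
  Real.sqrt (∑ i, v i ^ 2)

/-- The `i`-th largest singular value (0-indexed, listed with multiplicity in
decreasing order) of a real matrix, via the Courant–Fischer max-min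
characterization. -/
noncomputable def nthSingularValue {m n : Type*} [Fintype m] [Fintype n]
    (M : Matrix m n ℝ) (i : ℕ) : ℝ :=
  sSup {t : ℝ | ∃ V : Submodule ℝ (n → ℝ), Module.finrank ℝ ↥V = i + 1 ∧
    ∀ v ∈ V, t * euclNorm v ≤ euclNorm (M.mulVec v)}

section EuclNorm

variable {n : Type*} [Fintype n]

lemma euclNorm_nonneg (w : n → ℝ) : 0 ≤ euclNorm w := Real.sqrt_nonneg _

lemma euclNorm_zero : euclNorm (0 : n → ℝ) = 0 := by
  simp [euclNorm]

lemma ne_zero_of_euclNorm_ne_zero {w : n → ℝ} (h : euclNorm w ≠ 0) : w ≠ 0 := by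
  rintro rfl
  exact h euclNorm_zero

lemma euclNorm_sq (w : n → ℝ) : euclNorm w ^ 2 = w ⬝ᵥ w := by
  rw [euclNorm, Real.sq_sqrt (by positivity)]
  simp only [dotProduct, sq]

lemma euclNorm_pos {w : n → ℝ} (hw : w ≠ 0) : 0 < euclNorm w :=
  (euclNorm_nonneg w).lt_of_ne' fun h => hw <| dotProduct_self_eq_zero.1 <| by
    rw [← euclNorm_sq, h, sq, zero_mul]

lemma euclNorm_smul (c : ℝ) (w : n → ℝ) : euclNorm (c • w) = |c| * euclNorm w := by
  refine (pow_left_inj₀ (euclNorm_nonneg _) (mul_nonneg (abs_nonneg c) (euclNorm_nonneg w))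
    two_ne_zero).1 ?_
  rw [mul_pow, sq_abs, euclNorm_sq, euclNorm_sq, dotProduct_smul, smul_dotProduct]
  simp only [smul_eq_mul]
  ring

lemma euclNorm_add_sq_of_dotProduct_eq_zero {a b : n → ℝ} (h : a ⬝ᵥ b = 0) :
    euclNorm (a + b) ^ 2 = euclNorm a ^ 2 + euclNorm b ^ 2 := by
  simp only [euclNorm_sq, add_dotProduct, dotProduct_add, h, dotProduct_comm b a]
  ring

lemma euclNorm_mulVec_le {m : Type*} [Fintype m] (M : Matrix m n ℝ) (w : n → ℝ) :
    euclNorm (M *ᵥ w) ≤ √(∑ i, ∑ j, M i j ^ 2) * euclNorm w := by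
  rw [euclNorm, euclNorm, ← Real.sqrt_mul (by positivity), Finset.sum_mul]
  gcongr with i
  exact Finset.sum_mul_sq_le_sq_mul_sq _ _ _

end EuclNorm

lemma Submodule.exists_mem_ne_zero_of_finrank_pos {K E : Type*} [DivisionRing K] [AddCommGroup E]
    [Module K E] {V : Submodule K E} (hV : 0 < Module.finrank K V) : ∃ w ∈ V, w ≠ 0 :=
  V.exists_mem_ne_zero_of_ne_bot fun h => by rw [h, finrank_bot] at hV; exact hV.false

section SingularValues

variable {m n : Type*} [Fintype m] [Fintype n] {M : Matrix m n ℝ} {i : ℕ}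

lemma le_of_forall_exists_euclNorm_mulVec_le {c t : ℝ}
    (h : ∀ V : Submodule ℝ (n → ℝ), Module.finrank ℝ V = i + 1 →
      ∃ w ∈ V, w ≠ 0 ∧ euclNorm (M *ᵥ w) ≤ c * euclNorm w)
    {V : Submodule ℝ (n → ℝ)} (hV : Module.finrank ℝ V = i + 1)
    (ht : ∀ w ∈ V, t * euclNorm w ≤ euclNorm (M *ᵥ w)) : t ≤ c := by
  obtain ⟨w, hwV, hw0, hw⟩ := h V hV
  exact le_of_mul_le_mul_right ((ht w hwV).trans hw) (euclNorm_pos hw0)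

lemma nthSingularValue_le {c : ℝ} (hc : 0 ≤ c)
    (h : ∀ V : Submodule ℝ (n → ℝ), Module.finrank ℝ V = i + 1 →
      ∃ w ∈ V, w ≠ 0 ∧ euclNorm (M *ᵥ w) ≤ c * euclNorm w) :
    nthSingularValue M i ≤ c :=
  Real.sSup_le (fun _ ⟨_, hV, ht⟩ => le_of_forall_exists_euclNorm_mulVec_le h hV ht) hc

lemma le_nthSingularValue {t : ℝ} {V : Submodule ℝ (n → ℝ)} (hV : Module.finrank ℝ V = i + 1)
    (ht : ∀ w ∈ V, t * euclNorm w ≤ euclNorm (M *ᵥ w)) : t ≤ nthSingularValue M i := by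
  have hbound (W : Submodule ℝ (n → ℝ)) (hW : Module.finrank ℝ W = i + 1) :
      ∃ w ∈ W, w ≠ 0 ∧ euclNorm (M *ᵥ w) ≤ √(∑ i, ∑ j, M i j ^ 2) * euclNorm w := by
    obtain ⟨w, hwW, hw0⟩ := W.exists_mem_ne_zero_of_finrank_pos (by omega)
    exact ⟨w, hwW, hw0, euclNorm_mulVec_le M w⟩
  refine le_csSup ⟨√(∑ i, ∑ j, M i j ^ 2), ?_⟩ ⟨V, hV, ht⟩
  rintro s ⟨W, hW, hs⟩
  exact le_of_forall_exists_euclNorm_mulVec_le hbound hW hs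

variable (M i) in
lemma nthSingularValue_nonneg : 0 ≤ nthSingularValue M i := by
  by_cases h : ∃ V : Submodule ℝ (n → ℝ), Module.finrank ℝ V = i + 1
  · obtain ⟨V, hV⟩ := h
    exact le_nthSingularValue hV fun w _ => by simpa using euclNorm_nonneg _
  · simp [nthSingularValue, not_exists.1 h]

lemma nthSingularValue_zero_eq_one {v : n → ℝ} (hv : v ≠ 0)
    (hM : ∀ w, euclNorm (M *ᵥ w) ≤ euclNorm w) (hMv : euclNorm (M *ᵥ v) = euclNorm v) :
    nthSingularValue M 0 = 1 := by
  refine le_antisymm (nthSingularValue_le zero_le_one fun V hV => ?_) ?_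
  · obtain ⟨w, hwV, hw0⟩ := V.exists_mem_ne_zero_of_finrank_pos (by omega)
    exact ⟨w, hwV, hw0, by simpa using hM w⟩
  · refine le_nthSingularValue (finrank_span_singleton hv) fun w hw => ?_
    obtain ⟨c, rfl⟩ := Submodule.mem_span_singleton.1 hw
    rw [mulVec_smul, euclNorm_smul, euclNorm_smul, hMv, one_mul]

lemma Submodule.exists_mem_ne_zero_dotProduct_eq_zero (v : n → ℝ) {V : Submodule ℝ (n → ℝ)}
    (hV : 1 < Module.finrank ℝ V) : ∃ w ∈ V, w ≠ 0 ∧ v ⬝ᵥ w = 0 := by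
  let f : V →ₗ[ℝ] ℝ := (dotProductBilin ℝ ℝ v).comp V.subtype
  obtain ⟨⟨w, hwV⟩, hwf, hw0⟩ := Submodule.exists_mem_ne_zero_of_ne_bot
    (LinearMap.ker_ne_bot_of_finrank_lt (f := f) (by simpa using hV))
  exact ⟨w, hwV, by simpa using hw0, hwf⟩

lemma nthSingularValue_vecMulVec_eq_zero (u : m → ℝ) (v : n → ℝ) (hi : 1 ≤ i) :
    nthSingularValue (vecMulVec u v) i = 0 := by
  refine le_antisymm (nthSingularValue_le le_rfl fun V hV => ?_) (nthSingularValue_nonneg _ _)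
  obtain ⟨w, hwV, hw0, hvw⟩ := V.exists_mem_ne_zero_dotProduct_eq_zero v (by omega)
  exact ⟨w, hwV, hw0, by simp [vecMulVec_mulVec, hvw, euclNorm]⟩

lemma linearIndependent_pair_of_dotProduct_eq_zero {v w : n → ℝ} (hv : v ≠ 0) (hw : w ≠ 0)
    (h : v ⬝ᵥ w = 0) : LinearIndependent ℝ ![v, w] := by
  refine LinearIndependent.pair_iff.2 fun a b hab => ?_
  have ha : a * (v ⬝ᵥ v) = 0 := by
    simpa [dotProduct_add, dotProduct_smul, h] using congrArg (v ⬝ᵥ ·) hab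
  obtain rfl : a = 0 := (mul_eq_zero.1 ha).resolve_right (mt dotProduct_self_eq_zero.1 hv)
  rw [zero_smul, zero_add, smul_eq_zero] at hab
  exact ⟨rfl, hab.resolve_right hw⟩

variable {u : m → ℝ} {v : n → ℝ}

lemma mulVec_eq_zero_of_nthSingularValue_one_eq_zero (hu : euclNorm u = 1) (hv : euclNorm v = 1)
    (hMv : M *ᵥ v = u) (huM : u ᵥ* M = v) (h : nthSingularValue M 1 = 0) {w : n → ℝ}
    (hw : v ⬝ᵥ w = 0) : M *ᵥ w = 0 := by
  by_contra hMw
  have hw0 : w ≠ 0 := by rintro rfl; exact hMw (mulVec_zero M)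
  have hv0 : v ≠ 0 := ne_zero_of_euclNorm_ne_zero (hv ▸ one_ne_zero)
  have huMw : u ⬝ᵥ M *ᵥ w = 0 := by rw [dotProduct_mulVec, huM, hw]
  -- on `span {v, w}` the matrix stretches by at least `t`, as `M v = u` and `M w` are orthogonal
  set t := min 1 (euclNorm (M *ᵥ w) / euclNorm w)
  have ht0 : 0 < t := lt_min one_pos (div_pos (euclNorm_pos hMw) (euclNorm_pos hw0))
  have ht1 : t ^ 2 ≤ 1 := pow_le_one₀ ht0.le (min_le_left _ _)
  have htw : t ^ 2 * euclNorm w ^ 2 ≤ euclNorm (M *ᵥ w) ^ 2 := by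
    rw [← mul_pow]
    gcongr
    · exact mul_nonneg ht0.le (euclNorm_nonneg w)
    exact (le_div_iff₀ (euclNorm_pos hw0)).1 (min_le_right _ _)
  have ht : t ≤ nthSingularValue M 1 := by
    refine le_nthSingularValue (V := Submodule.span ℝ (Set.range ![v, w])) ?_ fun z hz => ?_
    · rw [finrank_span_eq_card (linearIndependent_pair_of_dotProduct_eq_zero hv0 hw0 hw)]
      simp
    rw [range_cons_cons_empty] at hz
    obtain ⟨a, b, rfl⟩ := Submodule.mem_span_pair.1 hz
    refine le_of_pow_le_pow_left₀ two_ne_zero (euclNorm_nonneg _) ?_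
    rw [mulVec_add, mulVec_smul, mulVec_smul, hMv, mul_pow,
      euclNorm_add_sq_of_dotProduct_eq_zero (by simp [dotProduct_smul, smul_dotProduct, hw]),
      euclNorm_add_sq_of_dotProduct_eq_zero (by simp [dotProduct_smul, smul_dotProduct, huMw]),
      euclNorm_smul, euclNorm_smul, euclNorm_smul, euclNorm_smul, hu, hv]
    simp only [mul_pow, sq_abs, mul_one]
    nlinarith [mul_le_mul_of_nonneg_left ht1 (sq_nonneg a),
      mul_le_mul_of_nonneg_left htw (sq_nonneg b)]
  linarith

theorem eq_vecMulVec_of_nthSingularValue_one_eq_zero (hu : euclNorm u = 1) (hv : euclNorm v = 1)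
    (hMv : M *ᵥ v = u) (huM : u ᵥ* M = v) (h : nthSingularValue M 1 = 0) :
    M = vecMulVec u v := by
  refine ext_iff_mulVec.2 fun w => ?_
  have hperp : v ⬝ᵥ (w - (v ⬝ᵥ w) • v) = 0 := by
    rw [dotProduct_sub, dotProduct_smul, ← euclNorm_sq, hv, smul_eq_mul, one_pow, mul_one, sub_self]
  have hker := mulVec_eq_zero_of_nthSingularValue_one_eq_zero hu hv hMv huM h hperp
  rw [mulVec_sub, mulVec_smul, hMv, sub_eq_zero] at hker
  rw [hker, vecMulVec_mulVec, op_smul_eq_smul]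

end SingularValues

section JointPmf

variable {X Y : Type*} [Fintype X] [Fintype Y] {p : X × Y → ℝ}

noncomputable def normalizedJoint (p : X × Y → ℝ) : Matrix X Y ℝ :=
  of fun x y => p (x, y) / √(margX p x * margY p y)

lemma euclNorm_sqrt_margX (hX : ∀ x, 0 ≤ margX p x) (hp1 : ∑ z, p z = 1) :
    euclNorm (fun x => √(margX p x)) = 1 := by
  rw [euclNorm, Real.sqrt_eq_one]
  simp_rw [Real.sq_sqrt (hX _)]
  rw [← hp1, Fintype.sum_prod_type]
  rfl

lemma euclNorm_sqrt_margY (hY : ∀ y, 0 ≤ margY p y) (hp1 : ∑ z, p z = 1) :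
    euclNorm (fun y => √(margY p y)) = 1 := by
  rw [euclNorm, Real.sqrt_eq_one]
  simp_rw [Real.sq_sqrt (hY _)]
  rw [← hp1, Fintype.sum_prod_type_right]
  rfl

lemma normalizedJoint_apply (hX : ∀ x, 0 ≤ margX p x) (x : X) (y : Y) :
    normalizedJoint p x y = p (x, y) / (√(margX p x) * √(margY p y)) := by
  rw [normalizedJoint, of_apply, Real.sqrt_mul (hX x)]

lemma normalizedJoint_mulVec_sqrt_margY (hX : ∀ x, 0 ≤ margX p x) (hY : ∀ y, 0 < margY p y) :
    normalizedJoint p *ᵥ (fun y => √(margY p y)) = fun x => √(margX p x) := by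
  ext x
  calc ∑ y, normalizedJoint p x y * √(margY p y) = ∑ y, p (x, y) / √(margX p x) := by
        refine sum_congr rfl fun y _ => ?_
        rw [normalizedJoint_apply hX]
        field_simp [(Real.sqrt_pos.2 (hY y)).ne']
    _ = √(margX p x) := by rw [← sum_div]; exact Real.div_sqrt

lemma sqrt_margX_vecMul_normalizedJoint (hX : ∀ x, 0 < margX p x) :
    (fun x => √(margX p x)) ᵥ* normalizedJoint p = fun y => √(margY p y) := by
  ext y
  calc ∑ x, √(margX p x) * normalizedJoint p x y = ∑ x, p (x, y) / √(margY p y) := by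
        refine sum_congr rfl fun x _ => ?_
        rw [normalizedJoint_apply fun x => (hX x).le]
        field_simp [(Real.sqrt_pos.2 (hX x)).ne']
    _ = √(margY p y) := by rw [← sum_div]; exact Real.div_sqrt

lemma normalizedJoint_eq_vecMulVec_iff (hX : ∀ x, 0 < margX p x) (hY : ∀ y, 0 < margY p y) :
    normalizedJoint p = vecMulVec (fun x => √(margX p x)) (fun y => √(margY p y)) ↔
      ∀ x y, p (x, y) = margX p x * margY p y := by
  rw [← Matrix.ext_iff]
  refine forall₂_congr fun x y => ?_
  have hxy := mul_pos (hX x) (hY y)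
  rw [normalizedJoint, of_apply, vecMulVec_apply, ← Real.sqrt_mul (hX x).le,
    div_eq_iff (Real.sqrt_pos.2 hxy).ne', Real.mul_self_sqrt hxy.le]

lemma euclNorm_normalizedJoint_mulVec_le (hp0 : ∀ z, 0 ≤ p z) (hX : ∀ x, 0 < margX p x)
    (hY : ∀ y, 0 < margY p y) (w : Y → ℝ) :
    euclNorm (normalizedJoint p *ᵥ w) ≤ euclNorm w := by
  -- Cauchy–Schwarz in each row, weighted by the conditional law `p (x, ·) / margX p x`
  have hrow (x : X) : (normalizedJoint p *ᵥ w) x ^ 2 ≤ ∑ y, p (x, y) * w y ^ 2 / margY p y := by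
    have hcs := sum_sq_le_sum_mul_sum_of_sq_le_mul univ
      (r := fun y => normalizedJoint p x y * w y) (f := fun y => p (x, y) / margX p x)
      (g := fun y => p (x, y) * w y ^ 2 / margY p y)
      (fun y _ => div_nonneg (hp0 _) (hX x).le)
      (fun y _ => div_nonneg (mul_nonneg (hp0 _) (sq_nonneg _)) (hY y).le)
      (fun y _ => le_of_eq ?_)
    · have hweights : ∑ y, p (x, y) / margX p x = 1 := by
        rw [← sum_div]
        exact div_self (hX x).ne'
      rwa [hweights, one_mul] at hcs
    rw [normalizedJoint_apply fun x => (hX x).le, mul_pow, div_pow, mul_pow,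
      Real.sq_sqrt (hX x).le, Real.sq_sqrt (hY y).le]
    field_simp
  refine Real.sqrt_le_sqrt ?_
  calc ∑ x, (normalizedJoint p *ᵥ w) x ^ 2 ≤ ∑ x, ∑ y, p (x, y) * w y ^ 2 / margY p y :=
        sum_le_sum fun x _ => hrow x
    _ = ∑ y, w y ^ 2 := by
      rw [sum_comm]
      refine sum_congr rfl fun y _ => ?_
      rw [← sum_div, ← sum_mul]
      exact mul_div_cancel_left₀ _ (hY y).ne'

end JointPmf

/-- For a joint pmf `p` on finite `X × Y` with everywhere-positive
marginals and normalized joint matrix `Q(x,y) = p(x,y)/√(p_X(x) p_Y(y))`, the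
following are equivalent: (i) `X` and `Y` are independent; (ii) `Q` is the rank-one
matrix `u vᵀ` with `u = √p_X`, `v = √p_Y`; (iii) all singular values of `Q` other than
the single top singular value `1` vanish. -/
theorem independence_iff_rank_one {X Y : Type*} [Fintype X] [Fintype Y]
    (p : X × Y → ℝ) (hp0 : ∀ z, 0 ≤ p z) (hp1 : ∑ z : X × Y, p z = 1)
    (hX : ∀ x, 0 < margX p x) (hY : ∀ y, 0 < margY p y)
    (Q : Matrix X Y ℝ)
    (hQ : ∀ x y, Q x y = p (x, y) / Real.sqrt (margX p x * margY p y))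
    (u : X → ℝ) (v : Y → ℝ)
    (hu : ∀ x, u x = Real.sqrt (margX p x)) (hv : ∀ y, v y = Real.sqrt (margY p y)) :
    ((∀ x y, p (x, y) = margX p x * margY p y) ↔ Q = vecMulVec u v) ∧
    ((Q = vecMulVec u v) ↔
      nthSingularValue Q 0 = 1 ∧ ∀ i : ℕ, 1 ≤ i → nthSingularValue Q i = 0) := by
  obtain rfl : Q = normalizedJoint p := Matrix.ext hQ
  obtain rfl : u = fun x => √(margX p x) := funext hu
  obtain rfl : v = fun y => √(margY p y) := funext hv
  have hu1 := euclNorm_sqrt_margX (fun x => (hX x).le) hp1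
  have hv1 := euclNorm_sqrt_margY (fun y => (hY y).le) hp1
  have hQv := normalizedJoint_mulVec_sqrt_margY (fun x => (hX x).le) hY
  have huQ := sqrt_margX_vecMul_normalizedJoint hX
  have hσ₀ : nthSingularValue (normalizedJoint p) 0 = 1 :=
    nthSingularValue_zero_eq_one (ne_zero_of_euclNorm_ne_zero (hv1 ▸ one_ne_zero))
      (euclNorm_normalizedJoint_mulVec_le hp0 hX hY) (by rw [hQv, hu1, hv1])
  refine ⟨(normalizedJoint_eq_vecMulVec_iff hX hY).symm,
    fun hrank => ⟨hσ₀, fun i hi => hrank ▸ nthSingularValue_vecMulVec_eq_zero _ _ hi⟩,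
    fun hσ => eq_vecMulVec_of_nthSingularValue_one_eq_zero hu1 hv1 hQv huQ (hσ.2 1 le_rfl)⟩
end

section
/- Let X and Y be finite types, p a joint pmf on X × Y with everywhere-positive marginals p_X and p_Y, and Q(x, y) = p(x, y) / √(p_X(x) p_Y(y)) the normalized joint matrix. Let f : X → ℝ^K and g : Y → ℝ^K be whitened feature maps, meaning ∑_x p_X(x) f(x) f(x)ᵀ = I_K and ∑_y p_Y(y) g(y) g(y)ᵀ = I_K, and define the cross-correlation matrix P = ∑_{x,y} p(x, y) f(x) g(y)ᵀ ∈ ℝ^{K × K}. Then for every i with 1 ≤ i ≤ K, the i-th singular value of P is at most the i-th singular value of Q; in particular all singular values of P lie in [0, 1] and I_K − PᵀP is positive semidefinite. -/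
/-!
Let `A` and `B` be the matrices with rows `√p_X(x) f(x)` and `√p_Y(y) g(y)`. Whitening says
exactly `AᵀA = BᵀB = I`, and `P = Aᵀ Q B`. By Jensen's inequality on each row, with the
weights `p(x, ·)/p_X(x)`, the matrix `Q` is a contraction; `Aᵀ` is then a contraction and `B` an
isometry. Hence `B` carries every subspace on which `P` stretches by at least `t` onto a subspace
of the same dimension on which `Q` stretches by at least `t`, and the max-min characterization
compares the singular values.
-/

open Finset Matrix

section EuclNorm

variable {m n : Type*} [Fintype m] [Fintype n]

lemma euclNorm_eq_sqrt_dotProduct (v : n → ℝ) : euclNorm v = √(v ⬝ᵥ v) := by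
  simp only [euclNorm, dotProduct, sq]

lemma euclNorm_pos_s10 {v : n → ℝ} (hv : v ≠ 0) : 0 < euclNorm v := by
  obtain ⟨i, hi⟩ := Function.ne_iff.1 hv
  exact Real.sqrt_pos.2 <| Finset.sum_pos' (fun j _ => sq_nonneg _)
    ⟨i, Finset.mem_univ _, sq_pos_of_ne_zero hi⟩

lemma euclNorm_mulVec_of_transpose_mul_self_eq_one [DecidableEq n] {B : Matrix m n ℝ}
    (hB : Bᵀ * B = 1) (v : n → ℝ) : euclNorm (B *ᵥ v) = euclNorm v := by
  rw [euclNorm_eq_sqrt_dotProduct, euclNorm_eq_sqrt_dotProduct, dotProduct_mulVec,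
    ← mulVec_transpose, mulVec_mulVec, hB, one_mulVec]

lemma euclNorm_transpose_mulVec_le [DecidableEq n] {A : Matrix m n ℝ} (hA : Aᵀ * A = 1)
    (w : m → ℝ) : euclNorm (Aᵀ *ᵥ w) ≤ euclNorm w := by
  set u := Aᵀ *ᵥ w
  have hAu : (A *ᵥ u) ⬝ᵥ (A *ᵥ u) = u ⬝ᵥ u := by
    rw [dotProduct_mulVec, ← mulVec_transpose, mulVec_mulVec, hA, one_mulVec]
  have hwAu : w ⬝ᵥ (A *ᵥ u) = u ⬝ᵥ u := by rw [dotProduct_mulVec, ← mulVec_transpose]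
  -- `‖w - A Aᵀ w‖² = ‖w‖² - ‖Aᵀ w‖²`
  have h0 : 0 ≤ (w - A *ᵥ u) ⬝ᵥ (w - A *ᵥ u) := dotProduct_self_star_nonneg _
  rw [sub_dotProduct, dotProduct_sub, dotProduct_sub, dotProduct_comm (A *ᵥ u), hAu, hwAu] at h0
  rw [euclNorm_eq_sqrt_dotProduct, euclNorm_eq_sqrt_dotProduct]
  exact Real.sqrt_le_sqrt (by linarith)

end EuclNorm

lemma Submodule.exists_finrank_eq {K V : Type*} [DivisionRing K] [AddCommGroup V] [Module K V]
    {k : ℕ} (hk : k ≤ Module.finrank K V) : ∃ W : Submodule K V, Module.finrank K W = k := by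
  obtain ⟨b, hb⟩ := exists_linearIndependent_of_le_finrank hk
  exact ⟨Submodule.span K (Set.range b), by rw [finrank_span_eq_card hb, Fintype.card_fin]⟩

section SingularValues

variable {m n m' n' : Type*} [Fintype m] [Fintype n] [Fintype m'] [Fintype n']

def singularValueSet (M : Matrix m n ℝ) (i : ℕ) : Set ℝ :=
  {t : ℝ | ∃ V : Submodule ℝ (n → ℝ), Module.finrank ℝ ↥V = i + 1 ∧
    ∀ v ∈ V, t * euclNorm v ≤ euclNorm (M.mulVec v)}

lemma nthSingularValue_eq_sSup (M : Matrix m n ℝ) (i : ℕ) :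
    nthSingularValue M i = sSup (singularValueSet M i) := rfl

lemma zero_mem_singularValueSet (M : Matrix m n ℝ) {i : ℕ} (hi : i < Fintype.card n) :
    0 ∈ singularValueSet M i := by
  obtain ⟨V, hV⟩ := Submodule.exists_finrank_eq (K := ℝ) (V := n → ℝ)
    (k := i + 1) (by rwa [Module.finrank_fintype_fun_eq_card])
  exact ⟨V, hV, fun v _ => by rw [zero_mul]; exact Real.sqrt_nonneg _⟩

lemma le_one_of_mem_singularValueSet {M : Matrix m n ℝ}
    (hM : ∀ v, euclNorm (M *ᵥ v) ≤ euclNorm v) {i : ℕ} {t : ℝ}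
    (ht : t ∈ singularValueSet M i) : t ≤ 1 := by
  obtain ⟨V, hV, hle⟩ := ht
  have hne : V ≠ ⊥ := by
    rintro rfl
    simp at hV
  obtain ⟨v, hvV, hv0⟩ := Submodule.exists_mem_ne_zero_of_ne_bot hne
  have hv := euclNorm_pos_s10 hv0
  nlinarith [(hle v hvV).trans (hM v)]

lemma singularValueSet_subset_of_le_mulVec_isometry [DecidableEq n] {M : Matrix m n ℝ}
    {N : Matrix m' n' ℝ} {B : Matrix n' n ℝ} (hB : Bᵀ * B = 1)
    (hMN : ∀ v, euclNorm (M *ᵥ v) ≤ euclNorm (N *ᵥ (B *ᵥ v))) (i : ℕ) :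
    singularValueSet M i ⊆ singularValueSet N i := by
  have hBinj : Function.Injective B.mulVecLin := fun v w hvw => by
    simpa only [mulVecLin_apply, mulVec_mulVec, hB, one_mulVec] using congrArg (Bᵀ *ᵥ ·) hvw
  rintro t ⟨V, hV, hle⟩
  refine ⟨V.map B.mulVecLin, ?_, ?_⟩
  · rw [← hV]
    exact (Submodule.equivMapOfInjective _ hBinj V).finrank_eq.symm
  · rintro _ ⟨v, hvV, rfl⟩
    rw [mulVecLin_apply, euclNorm_mulVec_of_transpose_mul_self_eq_one hB]
    exact (hle v hvV).trans (hMN v)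

lemma nthSingularValue_le_of_le_mulVec_isometry [DecidableEq n] {M : Matrix m n ℝ}
    {N : Matrix m' n' ℝ} {B : Matrix n' n ℝ} (hB : Bᵀ * B = 1)
    (hMN : ∀ v, euclNorm (M *ᵥ v) ≤ euclNorm (N *ᵥ (B *ᵥ v))) {i : ℕ}
    (hi : i < Fintype.card n) (hN : BddAbove (singularValueSet N i)) :
    nthSingularValue M i ≤ nthSingularValue N i := by
  rw [nthSingularValue_eq_sSup, nthSingularValue_eq_sSup]
  exact csSup_le_csSup hN ⟨0, zero_mem_singularValueSet M hi⟩
    (singularValueSet_subset_of_le_mulVec_isometry hB hMN i)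

lemma nthSingularValue_mem_Icc {M : Matrix m n ℝ} (hM : ∀ v, euclNorm (M *ᵥ v) ≤ euclNorm v)
    {i : ℕ} (hi : i < Fintype.card n) : nthSingularValue M i ∈ Set.Icc (0 : ℝ) 1 := by
  rw [nthSingularValue_eq_sSup]
  exact ⟨le_csSup ⟨1, fun _ => le_one_of_mem_singularValueSet hM⟩
      (zero_mem_singularValueSet M hi),
    csSup_le ⟨0, zero_mem_singularValueSet M hi⟩ fun _ => le_one_of_mem_singularValueSet hM⟩

lemma posSemidef_one_sub_transpose_mul_self [DecidableEq n] {M : Matrix m n ℝ}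
    (hM : ∀ v, euclNorm (M *ᵥ v) ≤ euclNorm v) : (1 - Mᵀ * M).PosSemidef := by
  refine .of_dotProduct_mulVec_nonneg ?_ fun v => ?_
  · simp [IsHermitian, transpose_sub, transpose_mul]
  · have hv := hM v
    rw [euclNorm_eq_sqrt_dotProduct, euclNorm_eq_sqrt_dotProduct,
      Real.sqrt_le_sqrt_iff (y := v ⬝ᵥ v) (dotProduct_self_star_nonneg v)] at hv
    rw [star_trivial, sub_mulVec, one_mulVec, dotProduct_sub, ← mulVec_mulVec,
      dotProduct_mulVec, vecMul_transpose]
    linarith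

end SingularValues

section Whitening

variable {X Y ι : Type*} [Fintype X] [Fintype Y]

noncomputable def featureMatrix (w : X → ℝ) (f : X → ι → ℝ) : Matrix X ι ℝ :=
  Matrix.of fun x k => √(w x) * f x k

lemma featureMatrix_transpose_mul_self {w : X → ℝ} (hw : ∀ x, 0 ≤ w x)
    (f : X → ι → ℝ) :
    (featureMatrix w f)ᵀ * featureMatrix w f = ∑ x, w x • vecMulVec (f x) (f x) := by
  ext j k
  simp only [mul_apply, transpose_apply, featureMatrix, of_apply, Matrix.sum_apply,
    Matrix.smul_apply, vecMulVec_apply, smul_eq_mul]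
  refine Finset.sum_congr rfl fun x _ => ?_
  linear_combination (f x j * f x k) * Real.mul_self_sqrt (hw x)

lemma sum_smul_vecMulVec_eq_featureMatrix {a : X → ℝ} {b : Y → ℝ} (ha : ∀ x, 0 < a x)
    (hb : ∀ y, 0 < b y) {p : X × Y → ℝ} {Q : Matrix X Y ℝ}
    (hQ : ∀ x y, Q x y = p (x, y) / √(a x * b y))
    (f : X → ι → ℝ) (g : Y → ι → ℝ) :
    ∑ x, ∑ y, p (x, y) • vecMulVec (f x) (g y) =
      (featureMatrix a f)ᵀ * Q * featureMatrix b g := by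
  ext j k
  rw [Matrix.mul_assoc]
  simp only [Matrix.sum_apply, Matrix.smul_apply, vecMulVec_apply, smul_eq_mul, mul_apply,
    transpose_apply, featureMatrix, of_apply, Finset.mul_sum]
  refine Finset.sum_congr rfl fun x _ => Finset.sum_congr rfl fun y _ => ?_
  have hxs := Real.sqrt_pos.2 (ha x)
  have hys := Real.sqrt_pos.2 (hb y)
  rw [hQ, Real.sqrt_mul (ha x).le]
  field_simp

end Whitening

lemma margY_nonneg {X Y : Type*} [Fintype X] {p : X × Y → ℝ} (hp0 : ∀ z, 0 ≤ p z) (y : Y) :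
    0 ≤ margY p y :=
  Finset.sum_nonneg fun x _ => hp0 (x, y)

section NormalizedJoint

variable {X Y : Type*} [Fintype X] [Fintype Y]

lemma sq_sum_div_sqrt_margX_mul_margY_le {p : X × Y → ℝ} (hp0 : ∀ z, 0 ≤ p z) {x : X}
    (hx : 0 < margX p x) (w : Y → ℝ) :
    (∑ y, p (x, y) / √(margX p x * margY p y) * w y) ^ 2 ≤
      ∑ y, p (x, y) / margY p y * w y ^ 2 := by
  have hweights : ∑ y, p (x, y) / margX p x = 1 := by
    rw [← Finset.sum_div]
    exact div_self hx.ne'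
  have hJensen := even_two.convexOn_pow.map_sum_le (t := Finset.univ)
    (p := fun y => √(margX p x) * w y / √(margY p y))
    (fun y _ => div_nonneg (hp0 _) hx.le) hweights fun _ _ => Set.mem_univ _
  simp only [smul_eq_mul] at hJensen
  calc (∑ y, p (x, y) / √(margX p x * margY p y) * w y) ^ 2
      = (∑ y, p (x, y) / margX p x * (√(margX p x) * w y / √(margY p y))) ^ 2 := by
        congr 1
        refine Finset.sum_congr rfl fun y _ => ?_
        rw [Real.sqrt_mul hx.le]
        field_simp
        rw [Real.sq_sqrt hx.le]
        ring
    _ ≤ _ := hJensen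
    _ = ∑ y, p (x, y) / margY p y * w y ^ 2 := by
        refine Finset.sum_congr rfl fun y _ => ?_
        rw [div_pow, mul_pow, Real.sq_sqrt hx.le, Real.sq_sqrt (margY_nonneg hp0 y)]
        field_simp

lemma euclNorm_mulVec_le_of_normalizedJoint {p : X × Y → ℝ} (hp0 : ∀ z, 0 ≤ p z)
    (hX : ∀ x, 0 < margX p x) (hY : ∀ y, 0 < margY p y) {Q : Matrix X Y ℝ}
    (hQ : ∀ x y, Q x y = p (x, y) / √(margX p x * margY p y)) (w : Y → ℝ) :
    euclNorm (Q *ᵥ w) ≤ euclNorm w := by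
  refine Real.sqrt_le_sqrt ?_
  calc ∑ x, (Q *ᵥ w) x ^ 2
      ≤ ∑ x, ∑ y, p (x, y) / margY p y * w y ^ 2 := by
        refine Finset.sum_le_sum fun x _ => ?_
        simp only [mulVec, dotProduct, hQ]
        exact sq_sum_div_sqrt_margX_mul_margY_le hp0 (hX x) w
    _ = ∑ y, margY p y / margY p y * w y ^ 2 := by
        rw [Finset.sum_comm]
        simp only [← Finset.sum_mul, ← Finset.sum_div, margY]
    _ = ∑ y, w y ^ 2 := by
        simp only [div_self (hY _).ne', one_mul]

end NormalizedJoint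

theorem whitened_cross_correlation_singular_values_general {X Y : Type*}
    [Fintype X] [Fintype Y] {K : ℕ}
    (p : X × Y → ℝ) (hp0 : ∀ z, 0 ≤ p z)
    (hX : ∀ x, 0 < margX p x) (hY : ∀ y, 0 < margY p y)
    (Q : Matrix X Y ℝ)
    (hQ : ∀ x y, Q x y = p (x, y) / Real.sqrt (margX p x * margY p y))
    (f : X → Fin K → ℝ) (g : Y → Fin K → ℝ)
    (hf : ∑ x, margX p x • vecMulVec (f x) (f x) = (1 : Matrix (Fin K) (Fin K) ℝ))
    (hg : ∑ y, margY p y • vecMulVec (g y) (g y) = (1 : Matrix (Fin K) (Fin K) ℝ))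
    (P : Matrix (Fin K) (Fin K) ℝ)
    (hP : P = ∑ x, ∑ y, p (x, y) • vecMulVec (f x) (g y)) :
    (∀ i < K, nthSingularValue P i ≤ nthSingularValue Q i) ∧
    (∀ i < K, nthSingularValue P i ∈ Set.Icc (0 : ℝ) 1) ∧
    ((1 : Matrix (Fin K) (Fin K) ℝ) - Pᵀ * P).PosSemidef := by
  set A := featureMatrix (margX p) f
  set B := featureMatrix (margY p) g
  have hA : Aᵀ * A = 1 := (featureMatrix_transpose_mul_self (fun x => (hX x).le) f).trans hf
  have hB : Bᵀ * B = 1 := (featureMatrix_transpose_mul_self (fun y => (hY y).le) g).trans hg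
  have hQ₁ := euclNorm_mulVec_le_of_normalizedJoint hp0 hX hY hQ
  have hPQ : ∀ v, euclNorm (P *ᵥ v) ≤ euclNorm (Q *ᵥ (B *ᵥ v)) := fun v => by
    rw [hP, sum_smul_vecMulVec_eq_featureMatrix hX hY hQ, ← mulVec_mulVec, ← mulVec_mulVec]
    exact euclNorm_transpose_mulVec_le hA _
  have hP₁ : ∀ v, euclNorm (P *ᵥ v) ≤ euclNorm v := fun v =>
    (hPQ v).trans <| (hQ₁ _).trans (euclNorm_mulVec_of_transpose_mul_self_eq_one hB v).le
  refine ⟨fun i hi => ?_, fun i hi => ?_, posSemidef_one_sub_transpose_mul_self hP₁⟩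
  · exact nthSingularValue_le_of_le_mulVec_isometry hB hPQ (by rwa [Fintype.card_fin])
      ⟨1, fun _ => le_one_of_mem_singularValueSet hQ₁⟩
  · exact nthSingularValue_mem_Icc hP₁ (by rwa [Fintype.card_fin])

/-- For whitened feature maps `f : X → ℝ^K` and `g : Y → ℝ^K`
(`E_{p_X}[f fᵀ] = I_K`, `E_{p_Y}[g gᵀ] = I_K`), every singular value of the
cross-correlation matrix `P = E_{p}[f gᵀ]` is dominated by the corresponding singular
value of the normalized joint matrix `Q`; in particular all singular values of `P`
lie in `[0, 1]` and `I_K − PᵀP` is positive semidefinite. -/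
theorem whitened_cross_correlation_singular_values {X Y : Type*}
    [Fintype X] [Fintype Y] {K : ℕ}
    (p : X × Y → ℝ) (hp0 : ∀ z, 0 ≤ p z) (hp1 : ∑ z : X × Y, p z = 1)
    (hX : ∀ x, 0 < margX p x) (hY : ∀ y, 0 < margY p y)
    (Q : Matrix X Y ℝ)
    (hQ : ∀ x y, Q x y = p (x, y) / Real.sqrt (margX p x * margY p y))
    (f : X → Fin K → ℝ) (g : Y → Fin K → ℝ)
    (hf : ∑ x, margX p x • vecMulVec (f x) (f x) = (1 : Matrix (Fin K) (Fin K) ℝ))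
    (hg : ∑ y, margY p y • vecMulVec (g y) (g y) = (1 : Matrix (Fin K) (Fin K) ℝ))
    (P : Matrix (Fin K) (Fin K) ℝ)
    (hP : P = ∑ x, ∑ y, p (x, y) • vecMulVec (f x) (g y)) :
    (∀ i < K, nthSingularValue P i ≤ nthSingularValue Q i) ∧
    (∀ i < K, nthSingularValue P i ∈ Set.Icc (0 : ℝ) 1) ∧
    ((1 : Matrix (Fin K) (Fin K) ℝ) - Pᵀ * P).PosSemidef :=
  whitened_cross_correlation_singular_values_general p hp0 hX hY Q hQ f g hf hg P hP
end
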